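/- Let X be a compact convex set and F ⊆ X a split face with complementary face F′ (so every x ∈ X∖(F∪F′) has a unique representation x = λ y + (1−λ) y′ with λ ∈ (0,1), y ∈ F, y′ ∈ F′, and X = conv(F ∪ F′)). Then for every affine function a : F → ℝ and every affine function a′ : F′ → ℝ there exists a unique affine function b : X → ℝ with b = a on F and b = a′ on F′; moreover b is bounded whenever a and a′ are bounded. -/
import Mathlib


variable {E : Type*} [AddCommGroup E] [Module ℝ E] [TopologicalSpace E]

/-- A subset `A` of `X` is extremal in `X` if whenever a midpoint `½(y+z)` of two points of
`X` lies in `A`, both points lie in `A`. -/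
def IsExtremalIn (X A : Set E) : Prop :=
  A ⊆ X ∧ ∀ y ∈ X, ∀ z ∈ X, (2⁻¹ : ℝ) • y + (2⁻¹ : ℝ) • z ∈ A → y ∈ A ∧ z ∈ A

/-- A face of `X` is a convex extremal subset of `X`. -/
def IsFaceIn (X A : Set E) : Prop := Convex ℝ A ∧ IsExtremalIn X A

/-- The complementary set `F′` of a face `F`: the union of all faces of `X` disjoint
from `F`. -/
def complSet (X F : Set E) : Set E := ⋃₀ {A : Set E | IsFaceIn X A ∧ Disjoint A F}

/-- `b` is affine on `X`. -/
def IsAffineOn (X : Set E) (b : E → ℝ) : Prop :=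
  ∀ u ∈ X, ∀ v ∈ X, ∀ t ∈ Set.Icc (0 : ℝ) 1,
    b (t • u + (1 - t) • v) = t * b u + (1 - t) * b v

set_option linter.unusedSectionVars false
set_option maxHeartbeats 1000000

lemma extremal_aux {X F : Set E} (hXconv : Convex ℝ X) (hF : IsExtremalIn X F) :
    ∀ n : ℕ, ∀ t : ℝ, 0 < t → t < 1 → (1:ℝ) ≤ 2^n * t →
      ∀ y ∈ X, ∀ z ∈ X, t • y + (1-t) • z ∈ F → y ∈ F := by
  intro n
  induction n with
  | zero =>
    intro t ht0 ht1 hle y _ z _ _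
    simp only [pow_zero, one_mul] at hle
    linarith
  | succ n ih =>
    intro t ht0 ht1 hle y hy z hz hx
    by_cases hhalf : t < 2⁻¹
    · have hw : (2*t) • y + (1-2*t) • z ∈ X :=
        hXconv hy hz (by linarith) (by linarith) (by ring)
      have heq : (2⁻¹ : ℝ) • ((2*t) • y + (1-2*t) • z) + (2⁻¹ : ℝ) • z
          = t • y + (1-t) • z := by module
      have h2 := hF.2 _ hw z hz (by rw [heq]; exact hx)
      have hle' : (1:ℝ) ≤ 2^n * (2*t) := by
        rw [pow_succ] at hle; linarith [hle]
      exact ih (2*t) (by linarith) (by linarith) hle' y hy z hz h2.1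
    · push_neg at hhalf
      have hw : (2*t-1) • y + (2-2*t) • z ∈ X :=
        hXconv hy hz (by linarith) (by linarith) (by ring)
      have heq : (2⁻¹ : ℝ) • y + (2⁻¹ : ℝ) • ((2*t-1) • y + (2-2*t) • z)
          = t • y + (1-t) • z := by module
      exact (hF.2 y hy _ hw (by rw [heq]; exact hx)).1

lemma extremal_pair {X F : Set E} (hXconv : Convex ℝ X) (hF : IsExtremalIn X F)
    {t : ℝ} (ht0 : 0 < t) (ht1 : t < 1) {y z : E} (hy : y ∈ X) (hz : z ∈ X)
    (hx : t • y + (1-t) • z ∈ F) : y ∈ F ∧ z ∈ F := by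
  constructor
  · obtain ⟨n, hn⟩ := pow_unbounded_of_one_lt (1/t) (by norm_num : (1:ℝ) < 2)
    rw [div_lt_iff₀ ht0] at hn
    exact extremal_aux hXconv hF n t ht0 ht1 (by linarith) y hy z hz hx
  · obtain ⟨n, hn⟩ := pow_unbounded_of_one_lt (1/(1-t)) (by norm_num : (1:ℝ) < 2)
    rw [div_lt_iff₀ (by linarith)] at hn
    have hx' : (1-t) • z + (1-(1-t)) • y ∈ F := by
      have h : (1-t) • z + (1-(1-t)) • y = t • y + (1-t) • z := by module
      rw [h]; exact hx
    exact extremal_aux hXconv hF n (1-t) (by linarith) (by linarith) (by linarith) z hz y hy hx'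

lemma complSet_subset {X F : Set E} : complSet X F ⊆ X := by
  rintro x ⟨A, ⟨hA, _⟩, hxA⟩
  exact hA.2.1 hxA

lemma complSet_disjoint {X F : Set E} : ∀ w ∈ complSet X F, w ∉ F := by
  rintro w ⟨A, ⟨hA, hdisj⟩, hwA⟩ hwF
  exact (Set.disjoint_left.mp hdisj hwA) hwF

lemma complSet_extremal {X F : Set E} : IsExtremalIn X (complSet X F) := by
  refine ⟨complSet_subset, ?_⟩
  rintro y hy z hz ⟨A, ⟨hA, hdisj⟩, hxA⟩
  obtain ⟨h1, h2⟩ := hA.2.2 y hy z hz hxA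
  exact ⟨⟨A, ⟨hA, hdisj⟩, h1⟩, ⟨A, ⟨hA, hdisj⟩, h2⟩⟩

lemma coeff_eq_one {X F : Set E} (hXconv : Convex ℝ X) (hface : IsFaceIn X F)
    {t : ℝ} (ht : t ∈ Set.Icc (0:ℝ) 1) {y z : E} (hy : y ∈ F) (hz : z ∈ complSet X F)
    (hx : t • y + (1-t) • z ∈ F) : t = 1 := by
  by_contra h
  have ht1 : t < 1 := lt_of_le_of_ne ht.2 h
  rcases eq_or_lt_of_le ht.1 with h0 | h0
  · have he : t • y + (1-t) • z = z := by rw [← h0]; module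
    rw [he] at hx
    exact complSet_disjoint z hz hx
  · exact complSet_disjoint z hz
      (extremal_pair hXconv hface.2 h0 ht1 (hface.2.1 hy) (complSet_subset hz) hx).2

lemma coeff_eq_zero {X F : Set E} (hXconv : Convex ℝ X) (hface : IsFaceIn X F)
    {t : ℝ} (ht : t ∈ Set.Icc (0:ℝ) 1) {y z : E} (hy : y ∈ F) (hz : z ∈ complSet X F)
    (hx : t • y + (1-t) • z ∈ complSet X F) : t = 0 := by
  by_contra h
  have ht0 : 0 < t := lt_of_le_of_ne ht.1 (Ne.symm h)
  rcases eq_or_lt_of_le ht.2 with h1 | h1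
  · have he : t • y + (1-t) • z = y := by rw [h1]; module
    rw [he] at hx
    exact complSet_disjoint y hx hy
  · exact complSet_disjoint y
      (extremal_pair hXconv complSet_extremal ht0 h1 (hface.2.1 hy) (complSet_subset hz) hx).1 hy

/-- Let `X` be a compact convex set and `F` a split face with complementary face
`F′ = complSet X F` (so `X = conv(F ∪ F′)` and every `x ∈ X∖(F∪F′)` has a unique
representation `x = λy + (1−λ)y′` with `λ ∈ (0,1)`, `y ∈ F`, `y′ ∈ F′`). Then for all affine
`a : F → ℝ` and `a′ : F′ → ℝ` there is a unique affine `b : X → ℝ` with `b = a` on `F` and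
`b = a′` on `F′`; moreover `b` is bounded whenever `a` and `a′` are bounded. -/
theorem stmt17 (X : Set E) (hXc : IsCompact X) (hXconv : Convex ℝ X)
    (F : Set E) (hface : IsFaceIn X F)
    (hcompconv : Convex ℝ (complSet X F))
    (hXdecomp : X = convexHull ℝ (F ∪ complSet X F))
    (huniq : ∀ x ∈ X \ (F ∪ complSet X F),
      ∃! p : ℝ × E × E, p.1 ∈ Set.Ioo (0 : ℝ) 1 ∧ p.2.1 ∈ F ∧
        p.2.2 ∈ complSet X F ∧ x = p.1 • p.2.1 + (1 - p.1) • p.2.2)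
    (a a' : E → ℝ) (ha : IsAffineOn F a) (ha' : IsAffineOn (complSet X F) a') :
    ∃ b : E → ℝ,
      (IsAffineOn X b ∧ (∀ y ∈ F, b y = a y) ∧ (∀ z ∈ complSet X F, b z = a' z)) ∧
      (∀ b' : E → ℝ, IsAffineOn X b' → (∀ y ∈ F, b' y = a y) →
        (∀ z ∈ complSet X F, b' z = a' z) → Set.EqOn b' b X) ∧
      ((∃ C : ℝ, ∀ y ∈ F, |a y| ≤ C) → (∃ C : ℝ, ∀ z ∈ complSet X F, |a' z| ≤ C) →
        ∃ C : ℝ, ∀ x ∈ X, |b x| ≤ C) := by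
  classical
  by_cases hFe : F = ∅
  · -- F is empty: X = complSet X F, take b = a'
    have hsub : F ⊆ complSet X F :=
      fun x hx => absurd hx (Set.eq_empty_iff_forall_notMem.mp hFe x)
    have hX : X = complSet X F :=
      hXdecomp.trans (by rw [Set.union_eq_self_of_subset_left hsub, hcompconv.convexHull_eq])
    refine ⟨a', ⟨?_, ?_, fun z _ => rfl⟩, ?_, ?_⟩
    · intro u hu v hv t ht
      exact ha' u (hX.subset hu) v (hX.subset hv) t ht
    · intro y hy
      exact absurd hy (Set.eq_empty_iff_forall_notMem.mp hFe y)
    · intro b' _ _ h2 x hx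
      exact h2 x (hX.subset hx)
    · rintro _ ⟨C, hC⟩
      exact ⟨C, fun x hx => hC x (hX.subset hx)⟩
  by_cases hF'e : complSet X F = ∅
  · -- complSet is empty: X = F, take b = a
    have hsub : complSet X F ⊆ F :=
      fun x hx => absurd hx (Set.eq_empty_iff_forall_notMem.mp hF'e x)
    have hX : X = F :=
      hXdecomp.trans (by rw [Set.union_eq_self_of_subset_right hsub, hface.1.convexHull_eq])
    refine ⟨a, ⟨?_, fun y _ => rfl, ?_⟩, ?_, ?_⟩
    · intro u hu v hv t ht
      exact ha u (hX.subset hu) v (hX.subset hv) t ht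
    · intro z hz
      exact absurd hz (Set.eq_empty_iff_forall_notMem.mp hF'e z)
    · intro b' _ h1 _ x hx
      exact h1 x (hX.subset hx)
    · rintro ⟨C, hC⟩ _
      exact ⟨C, fun x hx => hC x (hX.subset hx)⟩
  -- Main case: both F and complSet X F nonempty
  have hFne : F.Nonempty := Set.nonempty_iff_ne_empty.mpr hFe
  have hF'ne : (complSet X F).Nonempty := Set.nonempty_iff_ne_empty.mpr hF'e
  have hFsub : F ⊆ X := hface.2.1
  have hdecomp : ∀ x ∈ X, ∃ t, t ∈ Set.Icc (0:ℝ) 1 ∧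
      ∃ y ∈ F, ∃ z ∈ complSet X F, x = t • y + (1-t) • z := by
    intro x hx
    rw [hXdecomp, convexHull_union hFne hF'ne, hface.1.convexHull_eq,
      hcompconv.convexHull_eq, mem_convexJoin] at hx
    obtain ⟨y, hy, z, hz, p, q, hp, hq, hpq, hseg⟩ := hx
    refine ⟨p, ⟨hp, by linarith⟩, y, hy, z, hz, ?_⟩
    rw [show (1:ℝ) - p = q from by linarith]
    exact hseg.symm
  set b : E → ℝ := fun x =>
    if x ∈ F then a x
    else if x ∈ complSet X F then a' x
    else if h : x ∈ X \ (F ∪ complSet X F) then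
      ((huniq x h).choose.1) * a ((huniq x h).choose.2.1) +
        (1 - (huniq x h).choose.1) * a' ((huniq x h).choose.2.2)
    else 0 with hbdef
  have hbF : ∀ x ∈ F, b x = a x := by
    intro x hx
    simp only [hbdef, if_pos hx]
  have hbF' : ∀ x ∈ complSet X F, b x = a' x := by
    intro x hx
    simp only [hbdef, if_neg (complSet_disjoint x hx), if_pos hx]
  have hbval : ∀ t ∈ Set.Icc (0:ℝ) 1, ∀ y ∈ F, ∀ z ∈ complSet X F,
      b (t • y + (1-t) • z) = t * a y + (1-t) * a' z := by
    intro t ht y hy z hz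
    have hxX : t • y + (1-t) • z ∈ X :=
      hXconv (hFsub hy) (complSet_subset hz) ht.1 (by linarith [ht.2]) (by ring)
    by_cases hxF : t • y + (1-t) • z ∈ F
    · have ht1 : t = 1 := coeff_eq_one hXconv hface ht hy hz hxF
      have hxy : t • y + (1-t) • z = y := by rw [ht1]; module
      rw [hbF _ hxF, hxy, ht1]; ring
    · by_cases hxF' : t • y + (1-t) • z ∈ complSet X F
      · have ht0 : t = 0 := coeff_eq_zero hXconv hface ht hy hz hxF'
        have hxz : t • y + (1-t) • z = z := by rw [ht0]; module
        rw [hbF' _ hxF', hxz, ht0]; ring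
      · have hx' : t • y + (1-t) • z ∈ X \ (F ∪ complSet X F) :=
          ⟨hxX, by rintro (h | h); exacts [hxF h, hxF' h]⟩
        have ht0 : 0 < t := by
          rcases eq_or_lt_of_le ht.1 with h0 | h0
          · exfalso
            have hxz : t • y + (1-t) • z = z := by rw [← h0]; module
            exact hxF' (by rw [hxz]; exact hz)
          · exact h0
        have ht1 : t < 1 := by
          rcases eq_or_lt_of_le ht.2 with h1 | h1
          · exfalso
            have hxy : t • y + (1-t) • z = y := by rw [h1]; module
            exact hxF (by rw [hxy]; exact hy)
          · exact h1
        have hspec := (huniq _ hx').choose_spec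
        have hq : (t, y, z) = (huniq _ hx').choose :=
          hspec.2 (t, y, z) ⟨⟨ht0, ht1⟩, hy, hz, rfl⟩
        have hb : b (t • y + (1-t) • z) =
            ((huniq _ hx').choose.1) * a ((huniq _ hx').choose.2.1) +
              (1 - (huniq _ hx').choose.1) * a' ((huniq _ hx').choose.2.2) := by
          simp only [hbdef, if_neg hxF, if_neg hxF', dif_pos hx']
        rw [hb, ← hq]
  have hb4 : ∀ c₁ c₂ c₃ c₄ : ℝ, 0 ≤ c₁ → 0 ≤ c₂ → 0 ≤ c₃ → 0 ≤ c₄ →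
      c₁ + c₂ + c₃ + c₄ = 1 →
      ∀ y₁ ∈ F, ∀ y₂ ∈ F, ∀ z₁ ∈ complSet X F, ∀ z₂ ∈ complSet X F,
      b (c₁ • y₁ + c₂ • y₂ + c₃ • z₁ + c₄ • z₂)
        = c₁ * a y₁ + c₂ * a y₂ + c₃ * a' z₁ + c₄ * a' z₂ := by
    intro c₁ c₂ c₃ c₄ h1 h2 h3 h4 hsum y₁ hy₁ y₂ hy₂ z₁ hz₁ z₂ hz₂
    rcases eq_or_lt_of_le (by positivity : (0:ℝ) ≤ c₁ + c₂) with hμ0 | hμ0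
    · -- c₁ = c₂ = 0
      have hc₁ : c₁ = 0 := by linarith
      have hc₂ : c₂ = 0 := by linarith
      have hz : c₃ • z₁ + (1 - c₃) • z₂ ∈ complSet X F :=
        hcompconv hz₁ hz₂ h3 (by linarith) (by ring)
      have hveq : c₁ • y₁ + c₂ • y₂ + c₃ • z₁ + c₄ • z₂
          = c₃ • z₁ + (1 - c₃) • z₂ := by
        rw [hc₁, hc₂, show (1:ℝ) - c₃ = c₄ from by linarith]; module
      rw [hveq, hbF' _ hz, ha' z₁ hz₁ z₂ hz₂ c₃ ⟨h3, by linarith⟩, hc₁, hc₂,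
        show (1:ℝ) - c₃ = c₄ from by linarith]
      ring
    rcases eq_or_lt_of_le (show c₁ + c₂ ≤ 1 from by linarith) with hμ1 | hμ1
    · -- c₃ = c₄ = 0
      have hc₃ : c₃ = 0 := by linarith
      have hc₄ : c₄ = 0 := by linarith
      have hy : c₁ • y₁ + (1 - c₁) • y₂ ∈ F :=
        hface.1 hy₁ hy₂ h1 (by linarith) (by ring)
      have hveq : c₁ • y₁ + c₂ • y₂ + c₃ • z₁ + c₄ • z₂
          = c₁ • y₁ + (1 - c₁) • y₂ := by
        rw [hc₃, hc₄, show (1:ℝ) - c₁ = c₂ from by linarith]; module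
      rw [hveq, hbF _ hy, ha y₁ hy₁ y₂ hy₂ c₁ ⟨h1, by linarith⟩, hc₃, hc₄,
        show (1:ℝ) - c₁ = c₂ from by linarith]
      ring
    · -- 0 < c₁+c₂ < 1
      have hν : (0:ℝ) < c₃ + c₄ := by linarith
      set s : ℝ := c₁ / (c₁ + c₂) with hs
      set s' : ℝ := c₃ / (c₃ + c₄) with hs'
      have hs0 : 0 ≤ s := div_nonneg h1 hμ0.le
      have hs1 : s ≤ 1 := by rw [hs, div_le_one hμ0]; linarith
      have hs'0 : 0 ≤ s' := div_nonneg h3 hν.le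
      have hs'1 : s' ≤ 1 := by rw [hs', div_le_one hν]; linarith
      have e1 : (c₁ + c₂) * s = c₁ := by rw [hs]; field_simp
      have e2 : (c₁ + c₂) * (1 - s) = c₂ := by rw [mul_sub, mul_one, e1]; ring
      have e3 : (c₃ + c₄) * s' = c₃ := by rw [hs']; field_simp
      have e4 : (c₃ + c₄) * (1 - s') = c₄ := by rw [mul_sub, mul_one, e3]; ring
      have hy : s • y₁ + (1 - s) • y₂ ∈ F :=
        hface.1 hy₁ hy₂ hs0 (by linarith) (by ring)
      have hz : s' • z₁ + (1 - s') • z₂ ∈ complSet X F :=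
        hcompconv hz₁ hz₂ hs'0 (by linarith) (by ring)
      have hveq : c₁ • y₁ + c₂ • y₂ + c₃ • z₁ + c₄ • z₂
          = (c₁ + c₂) • (s • y₁ + (1 - s) • y₂)
            + (1 - (c₁ + c₂)) • (s' • z₁ + (1 - s') • z₂) := by
        rw [show (1:ℝ) - (c₁ + c₂) = c₃ + c₄ from by linarith]
        rw [smul_add, smul_add, smul_smul, smul_smul, smul_smul, smul_smul,
          e1, e2, e3, e4]
        module
      rw [hveq, hbval (c₁ + c₂) ⟨hμ0.le, hμ1.le⟩ _ hy _ hz,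
        ha y₁ hy₁ y₂ hy₂ s ⟨hs0, hs1⟩, ha' z₁ hz₁ z₂ hz₂ s' ⟨hs'0, hs'1⟩]
      have e0 : (1:ℝ) - (c₁ + c₂) = c₃ + c₄ := by linarith
      linear_combination (a y₁) * e1 + (a y₂) * e2 + (a' z₁) * e3 + (a' z₂) * e4
        + (s' * a' z₁ + (1 - s') * a' z₂) * e0
  have haff : IsAffineOn X b := by
    intro u hu v hv t ht
    obtain ⟨s, hsI, y₁, hy₁, z₁, hz₁, hu'⟩ := hdecomp u hu
    obtain ⟨r, hrI, y₂, hy₂, z₂, hz₂, hv'⟩ := hdecomp v hv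
    have hbu : b u = s * a y₁ + (1-s) * a' z₁ := by
      rw [hu']; exact hbval s hsI y₁ hy₁ z₁ hz₁
    have hbv : b v = r * a y₂ + (1-r) * a' z₂ := by
      rw [hv']; exact hbval r hrI y₂ hy₂ z₂ hz₂
    have hx : t • u + (1-t) • v
        = (t*s) • y₁ + ((1-t)*r) • y₂ + (t*(1-s)) • z₁ + ((1-t)*(1-r)) • z₂ := by
      rw [hu', hv']; module
    rw [hx, hb4 (t*s) ((1-t)*r) (t*(1-s)) ((1-t)*(1-r))
      (mul_nonneg ht.1 hsI.1) (mul_nonneg (by linarith [ht.2]) hrI.1)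
      (mul_nonneg ht.1 (by linarith [hsI.2]))
      (mul_nonneg (by linarith [ht.2]) (by linarith [hrI.2]))
      (by ring) y₁ hy₁ y₂ hy₂ z₁ hz₁ z₂ hz₂, hbu, hbv]
    ring
  refine ⟨b, ⟨haff, hbF, hbF'⟩, ?_, ?_⟩
  · intro b' hb' h1 h2 x hx
    obtain ⟨t, ht, y, hy, z, hz, hx'⟩ := hdecomp x hx
    rw [hx', hb' y (hFsub hy) z (complSet_subset hz) t ht, h1 y hy, h2 z hz,
      hbval t ht y hy z hz]
  · rintro ⟨C, hC⟩ ⟨C', hC'⟩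
    refine ⟨max C C', fun x hx => ?_⟩
    obtain ⟨t, ht, y, hy, z, hz, hx'⟩ := hdecomp x hx
    rw [hx', hbval t ht y hy z hz]
    calc |t * a y + (1-t) * a' z| ≤ |t * a y| + |(1-t) * a' z| := abs_add_le _ _
      _ = t * |a y| + (1-t) * |a' z| := by
          rw [abs_mul, abs_mul, abs_of_nonneg ht.1,
            abs_of_nonneg (show (0:ℝ) ≤ 1 - t by linarith [ht.2])]
      _ ≤ t * max C C' + (1-t) * max C C' := by
          refine add_le_add (mul_le_mul_of_nonneg_left ?_ ht.1)
            (mul_le_mul_of_nonneg_left ?_ (by linarith [ht.2]))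
          · exact le_trans (hC y hy) (le_max_left _ _)
          · exact le_trans (hC' z hz) (le_max_right _ _)
      _ = max C C' := by ring
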